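/- arXiv:1305.1860 — 3 statements merged into one kernel-verified Lean document; each statement's English description precedes it below -/
import Mathlib

section
/- Let n be a natural number and let L_1,…,L_n be functions from (0,∞) to (−∞,∞] such that for each j there exists t > 0 with L_j(t) < ∞. Then for any real numbers x_1,…,x_n, min(L_1^*(x_1),…,L_n^*(x_n)) ≤ (L_1 ⊞ ⋯ ⊞ L_n)^*(x_1 + ⋯ + x_n) ≤ max(L_1^*(x_1),…,L_n^*(x_n)). -/
open Set MeasureTheory Filter

/-- Legendre–Fenchel transform `L^*(x) = sup_{t>0} [t·x − L(t)]`, with values in `[-∞,∞]`. -/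
noncomputable def LF (L : ℝ → EReal) (x : ℝ) : EReal :=
  ⨆ (t : ℝ) (_ : 0 < t), ((t * x : ℝ) : EReal) - L t

/-- Smallest generalized inverse `L^{*←}(u) = inf {x ∈ ℝ : L^*(x) ≥ u}`, with `inf ∅ = ∞`. -/
noncomputable def geInv (L : ℝ → EReal) (u : ℝ) : EReal :=
  sInf ((fun x : ℝ => (x : EReal)) '' {x : ℝ | (u : EReal) ≤ LF L x})

/-- Largest generalized inverse `L^{*⇐}(u) = inf {x ∈ ℝ : L^*(x) > u}`, with `inf ∅ = ∞`. -/
noncomputable def tgeInv (L : ℝ → EReal) (u : ℝ) : EReal :=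
  sInf ((fun x : ℝ => (x : EReal)) '' {x : ℝ | (u : EReal) < LF L x})

/-- Hölder convolution `(L_1 ⊞ ⋯ ⊞ L_n)(t) = inf { Σ_j α_j L_j(t/α_j) : α_j > 0, Σ_j α_j = 1 }`,
with `inf ∅ = ∞`. -/
noncomputable def hconv (n : ℕ) (L : Fin n → ℝ → EReal) (t : ℝ) : EReal :=
  ⨅ (α : Fin n → ℝ) (_ : (∀ j, 0 < α j) ∧ ∑ j, α j = 1),
    ∑ j, (α j : EReal) * L j (t / α j)

/-- Cramér–Chernoff function `L_X(t) = ln E e^{tX}`, with values in `(-∞,∞]`. -/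
noncomputable def cramer {Ω : Type*} [MeasurableSpace Ω] (μ : Measure Ω) (X : Ω → ℝ)
    (t : ℝ) : EReal :=
  ENNReal.log (∫⁻ ω, ENNReal.ofReal (Real.exp (t * X ω)) ∂μ)

/-!
Write `s = ∑ x_j`. For weights `α_j > 0` with `∑ α_j = 1` one has
`∑_j α_j ((t/α_j) x_j - ℓ_j - c) = t s - ∑_j α_j ℓ_j - c`.
Upper bound: if `t s - ∑_j α_j L_j(t/α_j) > c`, then some summand `(t/α_j) x_j - L_j(t/α_j)`
exceeds `c`, hence so does `L_j^*(x_j)`.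
Lower bound: given `u_j > 0` with `u_j x_j - L_j(u_j) > c` for every `j`, the harmonic weights
`α_j = t/u_j`, `t = (∑_j 1/u_j)⁻¹`, satisfy `t/α_j = u_j`, and the same identity gives
`t s - (L_1 ⊞ ⋯ ⊞ L_n)(t) ≥ c`.
-/

open Finset

namespace EReal

variable {ι : Type*}

@[simp, norm_cast]
theorem coe_finsetSum (s : Finset ι) (f : ι → ℝ) :
    ((∑ i ∈ s, f i : ℝ) : EReal) = ∑ i ∈ s, (f i : EReal) :=
  map_sum (⟨⟨Real.toEReal, coe_zero⟩, coe_add⟩ : ℝ →+ EReal) f s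

theorem finsetSum_ne_bot {s : Finset ι} {f : ι → EReal} (h : ∀ i ∈ s, f i ≠ ⊥) :
    ∑ i ∈ s, f i ≠ ⊥ := by
  classical
  induction s using Finset.induction_on with
  | empty => simp
  | insert a s ha ih =>
    rw [sum_insert ha, Ne, add_eq_bot_iff, not_or]
    exact ⟨h a (mem_insert_self a s), ih fun i hi => h i (mem_insert_of_mem hi)⟩

theorem ne_top_of_finsetSum_ne_top {s : Finset ι} {f : ι → EReal} (hbot : ∀ i ∈ s, f i ≠ ⊥)
    (htop : ∑ i ∈ s, f i ≠ ⊤) : ∀ i ∈ s, f i ≠ ⊤ := by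
  classical
  intro k hk hfk
  rw [← add_sum_erase s f hk, hfk,
    top_add_of_ne_bot (finsetSum_ne_bot fun i hi => hbot i (mem_of_mem_erase hi))] at htop
  exact htop rfl

theorem exists_coe_of_sum_mul_ne_top [Fintype ι] {α : ι → ℝ} (hα : ∀ j, 0 < α j)
    {y : ι → EReal} (hbot : ∀ j, y j ≠ ⊥) (htop : ∑ j, (α j : EReal) * y j ≠ ⊤) :
    ∃ l : ι → ℝ, ∀ j, y j = l j := by
  have hy_top : ∀ j, y j ≠ ⊤ := by
    intro j hj
    refine ne_top_of_finsetSum_ne_top (fun j _ => ?_) htop j (mem_univ j) ?_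
    · exact (mul_ne_bot _ _).2 ⟨.inl (coe_ne_bot _), .inr (hbot j), .inl (coe_ne_top _),
        .inl (EReal.coe_nonneg.2 (hα j).le)⟩
    · rw [hj, coe_mul_top_of_pos (hα j)]
  exact ⟨fun j => (y j).toReal, fun j => (coe_toReal (hy_top j) (hbot j)).symm⟩

end EReal

section Weights

variable {ι : Type*} [Fintype ι]

theorem sum_weight_mul_div_mul_sub_eq {α : ι → ℝ} (hα : ∀ j, α j ≠ 0) (hsum : ∑ j, α j = 1)
    (t c : ℝ) (x l : ι → ℝ) :
    ∑ j, α j * (t / α j * x j - l j - c) = t * ∑ j, x j - ∑ j, α j * l j - c := by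
  have hterm : ∀ j, α j * (t / α j * x j - l j - c) = t * x j - α j * l j - α j * c := by
    intro j
    field_simp [hα j]
  simp only [hterm, sum_sub_distrib, ← mul_sum, ← sum_mul, hsum, one_mul]

theorem exists_weights_div_eq [Nonempty ι] {u : ι → ℝ} (hu : ∀ j, 0 < u j) :
    ∃ t > 0, ∃ α : ι → ℝ, (∀ j, 0 < α j) ∧ ∑ j, α j = 1 ∧ ∀ j, t / α j = u j := by
  have hT : 0 < ∑ j, (u j)⁻¹ := sum_pos (fun j _ => inv_pos.2 (hu j)) univ_nonempty
  have ht : 0 < (∑ j, (u j)⁻¹)⁻¹ := inv_pos.2 hT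
  refine ⟨_, ht, fun j => (∑ j, (u j)⁻¹)⁻¹ / u j, fun j => div_pos ht (hu j), ?_, fun j => ?_⟩
  · simp_rw [div_eq_mul_inv, ← mul_sum]
    exact inv_mul_cancel₀ hT.ne'
  · exact div_div_cancel₀ ht.ne'

end Weights

section LegendreFenchel

variable {L : ℝ → EReal} {x : ℝ}

theorem le_LF {t : ℝ} (ht : 0 < t) : ((t * x : ℝ) : EReal) - L t ≤ LF L x :=
  le_iSup₂ (f := fun t (_ : 0 < t) => ((t * x : ℝ) : EReal) - L t) t ht

theorem lt_LF_iff {c : EReal} : c < LF L x ↔ ∃ t, 0 < t ∧ c < ((t * x : ℝ) : EReal) - L t := by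
  simp only [LF, lt_iSup_iff, exists_prop]

theorem exists_lt_sub_of_lt_LF (hbot : ∀ t, 0 < t → L t ≠ ⊥) {c : ℝ} (h : (c : EReal) < LF L x) :
    ∃ t l : ℝ, 0 < t ∧ L t = l ∧ c < t * x - l := by
  obtain ⟨t, ht, hc⟩ := lt_LF_iff.1 h
  have htop : L t ≠ ⊤ := by
    rintro h
    simp [h] at hc
  obtain ⟨l, hl⟩ : ∃ l : ℝ, L t = l := ⟨_, (EReal.coe_toReal htop (hbot t ht)).symm⟩
  rw [hl] at hc
  exact ⟨t, l, ht, hl, by exact_mod_cast hc⟩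

end LegendreFenchel

section HolderConvolution

variable {n : ℕ} {L : Fin n → ℝ → EReal}

theorem hconv_le {α : Fin n → ℝ} (hα : ∀ j, 0 < α j) (hsum : ∑ j, α j = 1) (t : ℝ) :
    hconv n L t ≤ ∑ j, (α j : EReal) * L j (t / α j) :=
  iInf₂_le (f := fun (α : Fin n → ℝ) (_ : (∀ j, 0 < α j) ∧ ∑ j, α j = 1) =>
    ∑ j, (α j : EReal) * L j (t / α j)) α ⟨hα, hsum⟩

theorem exists_lt_of_hconv_lt {t : ℝ} {r : EReal} (h : hconv n L t < r) :
    ∃ α : Fin n → ℝ, (∀ j, 0 < α j) ∧ ∑ j, α j = 1 ∧ ∑ j, (α j : EReal) * L j (t / α j) < r := by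
  simpa only [hconv, iInf_lt_iff, exists_prop, and_assoc] using h

theorem iInf_LF_le_LF_hconv (hn : 0 < n) (hbot : ∀ j, ∀ t : ℝ, 0 < t → L j t ≠ ⊥)
    (x : Fin n → ℝ) : ⨅ j, LF (L j) (x j) ≤ LF (hconv n L) (∑ j, x j) := by
  refine EReal.ge_of_forall_gt_iff_ge.1 fun c hc => ?_
  choose u l hu hl hc using fun j => exists_lt_sub_of_lt_LF (hbot j) (hc.trans_le (iInf_le _ j))
  have : Nonempty (Fin n) := Fin.pos_iff_nonempty.1 hn
  obtain ⟨t, ht, α, hα, hsum, hdiv⟩ := exists_weights_div_eq hu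
  have hgap : c ≤ t * ∑ j, x j - ∑ j, α j * l j := by
    have hnonneg : 0 ≤ ∑ j, α j * (t / α j * x j - l j - c) :=
      sum_nonneg fun j _ => mul_nonneg (hα j).le (by linarith [hdiv j ▸ hc j])
    linarith [sum_weight_mul_div_mul_sub_eq (fun j => (hα j).ne') hsum t c x l]
  calc (c : EReal) ≤ ((t * ∑ j, x j - ∑ j, α j * l j : ℝ) : EReal) := by exact_mod_cast hgap
    _ = ((t * ∑ j, x j : ℝ) : EReal) - ∑ j, (α j : EReal) * L j (t / α j) := by
      simp only [hdiv, hl]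
      push_cast
      rfl
    _ ≤ ((t * ∑ j, x j : ℝ) : EReal) - hconv n L t := EReal.sub_le_sub le_rfl (hconv_le hα hsum t)
    _ ≤ LF (hconv n L) (∑ j, x j) := le_LF ht

theorem LF_hconv_le_iSup_LF (hbot : ∀ j, ∀ t : ℝ, 0 < t → L j t ≠ ⊥) (x : Fin n → ℝ) :
    LF (hconv n L) (∑ j, x j) ≤ ⨆ j, LF (L j) (x j) := by
  refine EReal.ge_of_forall_gt_iff_ge.1 fun c hc => ?_
  obtain ⟨t, ht, hc⟩ := lt_LF_iff.1 hc
  have hlt : hconv n L t < ((t * ∑ j, x j - c : ℝ) : EReal) := by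
    rw [EReal.coe_sub, EReal.lt_sub_iff_add_lt (.inl (EReal.coe_ne_bot c))
      (.inl (EReal.coe_ne_top c)), add_comm]
    exact (EReal.lt_sub_iff_add_lt (.inr (EReal.coe_ne_top c)) (.inr (EReal.coe_ne_bot c))).1 hc
  obtain ⟨α, hα, hsum, hlt⟩ := exists_lt_of_hconv_lt hlt
  obtain ⟨l, hl⟩ := EReal.exists_coe_of_sum_mul_ne_top hα
    (fun j => hbot j _ (div_pos ht (hα j))) hlt.ne_top
  have hlt_real : ∑ j, α j * l j < t * ∑ j, x j - c := by
    simp only [hl] at hlt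
    exact_mod_cast hlt
  have hpos : 0 < ∑ j, α j * (t / α j * x j - l j - c) := by
    rw [sum_weight_mul_div_mul_sub_eq (fun j => (hα j).ne') hsum]
    linarith
  obtain ⟨k, -, hk⟩ := exists_lt_of_sum_lt (sum_const_zero.trans_lt hpos)
  have hck : c < t / α k * x k - l k := by linarith [pos_of_mul_pos_right hk (hα k).le]
  calc (c : EReal) ≤ ((t / α k * x k : ℝ) : EReal) - L k (t / α k) := by
        rw [hl]
        exact_mod_cast hck.le
    _ ≤ LF (L k) (x k) := le_LF (div_pos ht (hα k))
    _ ≤ ⨆ j, LF (L j) (x j) := le_iSup (fun j => LF (L j) (x j)) k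

end HolderConvolution

theorem LF_hconv_between_min_max_general (n : ℕ) (hn : 0 < n) (L : Fin n → ℝ → EReal)
    (hbot : ∀ j, ∀ t : ℝ, 0 < t → L j t ≠ ⊥)
    (x : Fin n → ℝ) :
    (⨅ j, LF (L j) (x j)) ≤ LF (hconv n L) (∑ j, x j) ∧
      LF (hconv n L) (∑ j, x j) ≤ ⨆ j, LF (L j) (x j) :=
  ⟨iInf_LF_le_LF_hconv hn hbot x, LF_hconv_le_iSup_LF hbot x⟩

/-- Proposition on `L^*`. For any reals `x_1,…,x_n`,
`min_j L_j^*(x_j) ≤ (L_1 ⊞ ⋯ ⊞ L_n)^*(x_1+⋯+x_n) ≤ max_j L_j^*(x_j)`. -/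
theorem LF_hconv_between_min_max (n : ℕ) (hn : 0 < n) (L : Fin n → ℝ → EReal)
    (hbot : ∀ j, ∀ t : ℝ, 0 < t → L j t ≠ ⊥)
    (hfin : ∀ j, ∃ t : ℝ, 0 < t ∧ L j t ≠ ⊤)
    (x : Fin n → ℝ) :
    (⨅ j, LF (L j) (x j)) ≤ LF (hconv n L) (∑ j, x j) ∧
      LF (hconv n L) (∑ j, x j) ≤ ⨆ j, LF (L j) (x j) :=
  LF_hconv_between_min_max_general n hn L hbot x
end

section
/- Let n be a natural number and let L_1,…,L_n be functions from (0,∞) to (−∞,∞] such that for each j there exists t > 0 with L_j(t) < ∞, and suppose additionally that for each j the function t ↦ L_j(t)/t is nondecreasing on (0,∞). Then for every u ∈ ℝ, (L_1 + ⋯ + L_n)^{*←}(u) ≤ L_1^{*←}(u) + ⋯ + L_n^{*←}(u). -/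
open Set MeasureTheory Filter

/-!
It suffices that `u ≤ Lⱼ^*(xⱼ)` for all `j` implies `u ≤ (∑ Lⱼ)^*(∑ xⱼ)`; the inequality of
generalized inverses then follows by taking `xⱼ` slightly above `Lⱼ^{*←}(u)`.
For `u ≤ 0` this holds because `(∑ Lⱼ)^* ≥ 0`: as `Lⱼ(t)/t` is nondecreasing and finite somewhere,
`Lⱼ(t) ≤ cⱼ t` near `0`, and `t x − ∑ Lⱼ(t) ≥ t (x − ∑ cⱼ) → 0`.
For `u > 0`, pick `tⱼ` with `tⱼ xⱼ − Lⱼ(tⱼ) > w ≥ 0` and put `t = min tⱼ`. Monotonicity of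
`Lⱼ(t)/t` gives `t xⱼ − Lⱼ(t) ≥ (t/tⱼ)(tⱼ xⱼ − Lⱼ(tⱼ)) ≥ 0`, and for the minimizing index this
term exceeds `w`; summing, `(∑ Lⱼ)^*(∑ xⱼ) > w`.
-/

open Topology

namespace EReal

lemma coe_finset_sum {ι : Type*} (s : Finset ι) (f : ι → ℝ) :
    ((∑ i ∈ s, f i : ℝ) : EReal) = ∑ i ∈ s, (f i : EReal) :=
  map_sum (⟨⟨Real.toEReal, coe_zero⟩, coe_add⟩ : ℝ →+ EReal) f s

lemma exists_lt_and_lt_sub_of_add_lt_coe {a b : EReal} (ha : a ≠ ⊤) (hb : b ≠ ⊤) {c : ℝ}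
    (h : a + b < c) : ∃ r : ℝ, a < r ∧ b < ((c - r : ℝ) : EReal) := by
  induction b using EReal.rec with
  | bot =>
    obtain ⟨r, hr, -⟩ := exists_between_coe_real (lt_top_iff_ne_top.2 ha)
    exact ⟨r, hr, bot_lt_coe _⟩
  | coe d =>
    have had : a < ((c - d : ℝ) : EReal) := by
      rw [coe_sub, EReal.lt_sub_iff_add_lt (.inl (coe_ne_bot d)) (.inl (coe_ne_top d))]
      exact h
    obtain ⟨r, har, hrc⟩ := exists_between_coe_real had
    refine ⟨r, har, ?_⟩
    have : r < c - d := mod_cast hrc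
    exact mod_cast (by linarith : d < c - r)
  | top => exact absurd rfl hb

lemma exists_lt_and_sum_le_of_sum_lt_coe {ι : Type*} (s : Finset ι) {a : ι → EReal}
    (ha : ∀ j ∈ s, a j ≠ ⊤) {c : ℝ} (h : ∑ j ∈ s, a j < c) :
    ∃ x : ι → ℝ, (∀ j ∈ s, a j < x j) ∧ ∑ j ∈ s, x j ≤ c := by
  classical
  induction s using Finset.induction_on generalizing c with
  | empty =>
    rw [Finset.sum_empty] at h
    exact ⟨0, by simp, by simpa using h.le⟩
  | @insert k s hk ih =>
    rw [Finset.sum_insert hk] at h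
    have has : ∀ j ∈ s, a j ≠ ⊤ := fun j hj => ha j (Finset.mem_insert_of_mem hj)
    have hsum : ∑ j ∈ s, a j ≠ ⊤ :=
      Finset.sum_induction a (· ≠ ⊤) (fun _ _ hx hy => (add_lt_top hx hy).ne) zero_ne_top has
    obtain ⟨r, hkr, hsr⟩ :=
      exists_lt_and_lt_sub_of_add_lt_coe (ha k (Finset.mem_insert_self k s)) hsum h
    obtain ⟨x, hx, hxs⟩ := ih has hsr
    refine ⟨Function.update x k r, fun j hj => ?_, ?_⟩
    · rcases Finset.mem_insert.1 hj with rfl | hj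
      · simpa using hkr
      · simpa [Function.update_of_ne (ne_of_mem_of_not_mem hj hk)] using hx j hj
    · rw [Finset.sum_insert hk, Function.update_self, Finset.sum_update_of_notMem hk]
      linarith

end EReal

section SingleFunction

variable {L : ℝ → EReal}

lemma LF_mono (L : ℝ → EReal) : Monotone (LF L) := fun _ _ hxy =>
  iSup₂_mono fun _ ht => EReal.sub_le_sub (mod_cast mul_le_mul_of_nonneg_left hxy ht.le) le_rfl

lemma coe_mul_sub_le_LF {t c : ℝ} (ht : 0 < t) (hc : L t ≤ ((t * c : ℝ) : EReal)) (x : ℝ) :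
    ((t * (x - c) : ℝ) : EReal) ≤ LF L x :=
  calc ((t * (x - c) : ℝ) : EReal) = ((t * x : ℝ) : EReal) - ((t * c : ℝ) : EReal) := by
        rw [← EReal.coe_sub, mul_sub]
    _ ≤ ((t * x : ℝ) : EReal) - L t := EReal.sub_le_sub le_rfl hc
    _ ≤ LF L x := le_iSup₂_of_le t ht le_rfl

lemma exists_le_coe_mul {t : ℝ} (ht : 0 < t) (h : L t ≠ ⊤) :
    ∃ c : ℝ, L t ≤ ((t * c : ℝ) : EReal) := by
  obtain ⟨r, hr, -⟩ := EReal.exists_between_coe_real (lt_top_iff_ne_top.2 h)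
  exact ⟨r / t, by rw [mul_div_cancel₀ r ht.ne']; exact hr.le⟩

lemma exists_le_coe_mul_and_lt_of_lt_LF {w x : ℝ} (h : (w : EReal) < LF L x) :
    ∃ t, 0 < t ∧ ∃ c : ℝ, L t ≤ ((t * c : ℝ) : EReal) ∧ w < t * (x - c) := by
  simp only [LF, lt_iSup_iff] at h
  obtain ⟨t, ht, hw⟩ := h
  have hLt : L t < ((t * x - w : ℝ) : EReal) := by
    rw [EReal.lt_sub_iff_add_lt (.inr (EReal.coe_ne_top w)) (.inr (EReal.coe_ne_bot w)),
      add_comm] at hw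
    rwa [EReal.coe_sub, EReal.lt_sub_iff_add_lt (.inl (EReal.coe_ne_bot w))
      (.inl (EReal.coe_ne_top w))]
  obtain ⟨r, hLr, hr⟩ := EReal.exists_between_coe_real hLt
  have hr : r < t * x - w := mod_cast hr
  refine ⟨t, ht, r / t, by rw [mul_div_cancel₀ r ht.ne']; exact hLr.le, ?_⟩
  rw [mul_sub, mul_div_cancel₀ r ht.ne']
  linarith

lemma le_coe_mul_of_le_coe_mul
    (hmono : ∀ s t : ℝ, 0 < s → s ≤ t → L s / (s : EReal) ≤ L t / (t : EReal))
    {s t c : ℝ} (hs : 0 < s) (hst : s ≤ t) (h : L t ≤ ((t * c : ℝ) : EReal)) :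
    L s ≤ ((s * c : ℝ) : EReal) := by
  have ht : 0 < t := hs.trans_le hst
  rw [EReal.coe_mul, ← EReal.div_le_iff_le_mul (mod_cast hs) (EReal.coe_ne_top s)]
  rw [EReal.coe_mul, ← EReal.div_le_iff_le_mul (mod_cast ht) (EReal.coe_ne_top t)] at h
  exact (hmono s t hs hst).trans h

lemma LF_nonneg_of_le_coe_mul {t₀ c : ℝ} (ht₀ : 0 < t₀)
    (h : ∀ t, 0 < t → t ≤ t₀ → L t ≤ ((t * c : ℝ) : EReal)) (x : ℝ) : 0 ≤ LF L x := by
  have hlim : Tendsto (fun t : ℝ => ((t * (x - c) : ℝ) : EReal)) (𝓝[>] 0) (𝓝 0) := by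
    have := ((continuous_mul_const (x - c)).tendsto' 0 0 (zero_mul _)).mono_left
      (nhdsWithin_le_nhds (s := Ioi 0))
    rw [← EReal.coe_zero]
    exact (continuous_coe_real_ereal.tendsto 0).comp this
  refine le_of_tendsto hlim ?_
  filter_upwards [Ioo_mem_nhdsGT ht₀] with t ht
  exact coe_mul_sub_le_LF ht.1 (h t ht.1 ht.2.le) x

lemma geInv_le_of_le_LF {u x : ℝ} (h : (u : EReal) ≤ LF L x) : geInv L u ≤ x :=
  sInf_le ⟨x, h, rfl⟩

lemma le_LF_of_geInv_lt {u x : ℝ} (h : geInv L u < x) : (u : EReal) ≤ LF L x := by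
  obtain ⟨_, ⟨y, hy, rfl⟩, hyx⟩ := sInf_lt_iff.1 h
  exact hy.trans (LF_mono L (EReal.coe_le_coe_iff.1 hyx.le))

lemma geInv_lt_top {t : ℝ} (ht : 0 < t) (h : L t ≠ ⊤) (u : ℝ) : geInv L u < ⊤ := by
  obtain ⟨c, hc⟩ := exists_le_coe_mul ht h
  refine (geInv_le_of_le_LF (x := c + u / t) ?_).trans_lt (EReal.coe_lt_top _)
  have := coe_mul_sub_le_LF ht hc (c + u / t)
  rwa [add_sub_cancel_left, mul_div_cancel₀ u ht.ne'] at this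

end SingleFunction

section Sum

variable {ι : Type*} [Fintype ι] {L : ι → ℝ → EReal}

lemma sum_le_coe_mul_sum
    (hmono : ∀ j, ∀ s t : ℝ, 0 < s → s ≤ t → L j s / (s : EReal) ≤ L j t / (t : EReal))
    {t c : ι → ℝ} (hc : ∀ j, L j (t j) ≤ ((t j * c j : ℝ) : EReal)) {s : ℝ} (hs : 0 < s)
    (hst : ∀ j, s ≤ t j) : ∑ j, L j s ≤ ((s * ∑ j, c j : ℝ) : EReal) := by
  rw [Finset.mul_sum, EReal.coe_finset_sum]
  exact Finset.sum_le_sum fun j _ => le_coe_mul_of_le_coe_mul (hmono j) hs (hst j) (hc j)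

variable [Nonempty ι]
  (hmono : ∀ j, ∀ s t : ℝ, 0 < s → s ≤ t → L j s / (s : EReal) ≤ L j t / (t : EReal))
include hmono

lemma LF_sum_nonneg (hfin : ∀ j, ∃ t : ℝ, 0 < t ∧ L j t ≠ ⊤) (x : ℝ) :
    0 ≤ LF (fun t => ∑ j, L j t) x := by
  choose t ht hfin using hfin
  choose c hc using fun j => exists_le_coe_mul (ht j) (hfin j)
  obtain ⟨j₀, -, hj₀⟩ := Finset.exists_min_image Finset.univ t Finset.univ_nonempty
  exact LF_nonneg_of_le_coe_mul (ht j₀) (fun s hs hsj₀ => sum_le_coe_mul_sum hmono hc hs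
    fun j => hsj₀.trans (hj₀ j (Finset.mem_univ j))) x

lemma le_LF_sum_of_pos {u : ℝ} (hu : 0 < u) {x : ι → ℝ}
    (hx : ∀ j, (u : EReal) ≤ LF (L j) (x j)) :
    (u : EReal) ≤ LF (fun t => ∑ j, L j t) (∑ j, x j) := by
  refine EReal.ge_of_forall_gt_iff_ge.1 fun v hv => ?_
  have hwu : ((max v 0 : ℝ) : EReal) < u := mod_cast max_lt (mod_cast hv) hu
  choose t ht c hc hw using fun j => exists_le_coe_mul_and_lt_of_lt_LF (hwu.trans_le (hx j))
  obtain ⟨j₀, -, hj₀⟩ := Finset.exists_min_image Finset.univ t Finset.univ_nonempty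
  have hxc : ∀ j, 0 ≤ x j - c j := fun j =>
    (pos_of_mul_pos_right ((le_max_right v 0).trans_lt (hw j)) (ht j).le).le
  have hv₀ : v ≤ t j₀ * ∑ j, (x j - c j) :=
    calc v ≤ t j₀ * (x j₀ - c j₀) := ((le_max_left v 0).trans_lt (hw j₀)).le
      _ ≤ t j₀ * ∑ j, (x j - c j) := mul_le_mul_of_nonneg_left
          (Finset.single_le_sum (fun j _ => hxc j) (Finset.mem_univ j₀)) (ht j₀).le
  calc (v : EReal) ≤ ((t j₀ * (∑ j, x j - ∑ j, c j) : ℝ) : EReal) := by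
        rw [← Finset.sum_sub_distrib]; exact mod_cast hv₀
    _ ≤ LF (fun t => ∑ j, L j t) (∑ j, x j) := coe_mul_sub_le_LF (ht j₀)
        (sum_le_coe_mul_sum hmono hc (ht j₀) fun j => hj₀ j (Finset.mem_univ j)) _

lemma le_LF_sum (hfin : ∀ j, ∃ t : ℝ, 0 < t ∧ L j t ≠ ⊤) {u : ℝ} {x : ι → ℝ}
    (hx : ∀ j, (u : EReal) ≤ LF (L j) (x j)) :
    (u : EReal) ≤ LF (fun t => ∑ j, L j t) (∑ j, x j) := by
  rcases le_or_gt u 0 with hu | hu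
  · exact (EReal.coe_nonpos.2 hu).trans (LF_sum_nonneg hmono hfin _)
  · exact le_LF_sum_of_pos hmono hu hx

end Sum

theorem geInv_sum_le_sum_geInv_general (n : ℕ) (hn : 0 < n) (L : Fin n → ℝ → EReal)
    (hfin : ∀ j, ∃ t : ℝ, 0 < t ∧ L j t ≠ ⊤)
    (hmono : ∀ j, ∀ s t : ℝ, 0 < s → s ≤ t → L j s / (s : EReal) ≤ L j t / (t : EReal)) :
    ∀ u : ℝ, geInv (fun t => ∑ j, L j t) u ≤ ∑ j, geInv (L j) u := by
  intro u
  have : Nonempty (Fin n) := ⟨⟨0, hn⟩⟩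
  have hlt_top : ∀ j, geInv (L j) u ≠ ⊤ := fun j =>
    let ⟨t, ht, hLt⟩ := hfin j
    (geInv_lt_top ht hLt u).ne
  refine EReal.le_of_forall_lt_iff_le.1 fun z hz => ?_
  obtain ⟨x, hx, hxz⟩ :=
    EReal.exists_lt_and_sum_le_of_sum_lt_coe Finset.univ (fun j _ => hlt_top j) hz
  refine geInv_le_of_le_LF ((le_LF_sum hmono hfin fun j => ?_).trans (LF_mono _ hxz))
  exact le_LF_of_geInv_lt (hx j (Finset.mem_univ j))

/-- Corollary. If moreover each `t ↦ L_j(t)/t` is nondecreasing on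
`(0,∞)`, then the generalized inverse of the transform of the pointwise sum is at most the
sum of the generalized inverses. -/
theorem geInv_sum_le_sum_geInv (n : ℕ) (hn : 0 < n) (L : Fin n → ℝ → EReal)
    (hbot : ∀ j, ∀ t : ℝ, 0 < t → L j t ≠ ⊥)
    (hfin : ∀ j, ∃ t : ℝ, 0 < t ∧ L j t ≠ ⊤)
    (hmono : ∀ j, ∀ s t : ℝ, 0 < s → s ≤ t → L j s / (s : EReal) ≤ L j t / (t : EReal)) :
    ∀ u : ℝ, geInv (fun t => ∑ j, L j t) u ≤ ∑ j, geInv (L j) u :=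
  geInv_sum_le_sum_geInv_general n hn L hfin hmono
end

section
/- Let X_1,…,X_n be real-valued random variables on a common probability space (not assumed independent) such that for each j there exists t > 0 with E e^{tX_j} < ∞. Then for every u ∈ ℝ, (L_{X_1+⋯+X_n})^{*←}(u) ≤ L_{X_1}^{*←}(u) + ⋯ + L_{X_n}^{*←}(u) (the sum being well defined in [−∞,∞] since each summand is < ∞). -/
/-!
If `u ≤ L_{X_j}^*(x_j)` for every `j`, pick slopes `s_j > 0` nearly attaining these suprema and
put `t = (∑ 1/s_j)⁻¹`, `α_j = t/s_j`. Hölder's inequality with exponents `1/α_j` bounds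
`L_{X_1+⋯+X_n}` by the Hölder convolution of the `L_{X_j}`, so
`L_{X_1+⋯+X_n}(t) ≤ ∑ α_j L_{X_j}(s_j) ≤ ∑ α_j (s_j x_j - u) = t ∑ x_j - u` up to an arbitrarily
small error, i.e. `u ≤ L_{X_1+⋯+X_n}^*(∑ x_j)`. Taking infima over the `x_j` gives the claim.
-/

open Set MeasureTheory Filter

lemma EReal.coe_finset_sum_s14 {ι : Type*} (s : Finset ι) (f : ι → ℝ) :
    ((∑ i ∈ s, f i : ℝ) : EReal) = ∑ i ∈ s, (f i : EReal) :=
  map_sum (⟨⟨(↑), EReal.coe_zero⟩, EReal.coe_add⟩ : ℝ →+ EReal) f s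

lemma EReal.coe_le_coe_sub_iff {a r : ℝ} {b : EReal} :
    (a : EReal) ≤ r - b ↔ b ≤ ((r - a : ℝ) : EReal) := by
  rw [EReal.le_sub_iff_add_le (.inr (EReal.coe_ne_bot r)) (.inr (EReal.coe_ne_top r)), add_comm,
    ← EReal.le_sub_iff_add_le (.inl (EReal.coe_ne_bot a)) (.inl (EReal.coe_ne_top a)),
    EReal.coe_sub]

lemma EReal.coe_lt_coe_sub_iff {a r : ℝ} {b : EReal} :
    (a : EReal) < r - b ↔ b < ((r - a : ℝ) : EReal) := by
  rw [EReal.lt_sub_iff_add_lt (.inr (EReal.coe_ne_top a)) (.inr (EReal.coe_ne_bot a)), add_comm,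
    ← EReal.lt_sub_iff_add_lt (.inl (EReal.coe_ne_bot a)) (.inl (EReal.coe_ne_top a)),
    EReal.coe_sub]

lemma EReal.exists_coe_gt_of_sum_lt {ι : Type*} (s : Finset ι) {b : ι → EReal}
    (hb : ∀ i ∈ s, b i ≠ ⊤) {c : ℝ} (h : ∑ i ∈ s, b i < c) :
    ∃ y : ι → ℝ, (∀ i ∈ s, b i < y i) ∧ ∑ i ∈ s, y i < c := by
  classical
  induction s using Finset.induction_on generalizing c with
  | empty => exact ⟨0, by simp, by simpa using h⟩
  | insert a s ha ih =>
    rw [Finset.forall_mem_insert] at hb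
    rw [Finset.sum_insert ha] at h
    have hrest : ∑ i ∈ s, b i ≠ ⊤ :=
      Finset.sum_induction _ (· ≠ ⊤) (fun _ _ => EReal.add_ne_top) EReal.zero_ne_top hb.2
    obtain ⟨p, hap, hp⟩ := EReal.exists_between_coe_real
      ((EReal.lt_sub_iff_add_lt (.inr hb.1) (.inl hrest)).2 h)
    obtain ⟨y, hby, hy⟩ := ih hb.2 (EReal.coe_lt_coe_sub_iff.1 hp)
    refine ⟨Function.update y a p, ?_, ?_⟩
    · rw [Finset.forall_mem_insert, Function.update_self]
      refine ⟨hap, fun i hi => ?_⟩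
      rw [Function.update_of_ne (ne_of_mem_of_not_mem hi ha)]
      exact hby i hi
    · rw [Finset.sum_insert ha, Function.update_self, Finset.sum_congr rfl fun i hi =>
        Function.update_of_ne (ne_of_mem_of_not_mem hi ha) _ _]
      linarith

lemma coe_le_LF_of_le {L : ℝ → EReal} {t x z : ℝ} (ht : 0 < t)
    (h : L t ≤ ((t * x - z : ℝ) : EReal)) : (z : EReal) ≤ LF L x :=
  le_iSup₂_of_le t ht (EReal.coe_le_coe_sub_iff.2 h)

lemma coe_lt_LF_iff {L : ℝ → EReal} {x z : ℝ} :
    (z : EReal) < LF L x ↔ ∃ t > 0, L t < ((t * x - z : ℝ) : EReal) := by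
  simp only [LF, lt_iSup_iff, EReal.coe_lt_coe_sub_iff, exists_prop, gt_iff_lt]

lemma exists_le_LF {L : ℝ → EReal} (hL : ∃ t > 0, L t ≠ ⊤) (u : ℝ) :
    ∃ x, (u : EReal) ≤ LF L x := by
  obtain ⟨t, ht, hLt⟩ := hL
  obtain ⟨r, hr, -⟩ := EReal.exists_between_coe_real hLt.lt_top
  refine ⟨(u + r) / t, coe_le_LF_of_le ht ?_⟩
  rw [mul_div_cancel₀ _ ht.ne', add_sub_cancel_left]
  exact hr.le

lemma geInv_le {L : ℝ → EReal} {u x : ℝ} (h : (u : EReal) ≤ LF L x) : geInv L u ≤ x :=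
  sInf_le ⟨x, h, rfl⟩

lemma geInv_ne_top {L : ℝ → EReal} (hL : ∃ t > 0, L t ≠ ⊤) (u : ℝ) : geInv L u ≠ ⊤ := by
  obtain ⟨x, hx⟩ := exists_le_LF hL u
  exact ((geInv_le hx).trans_lt (EReal.coe_lt_top x)).ne

lemma exists_le_LF_of_geInv_lt {L : ℝ → EReal} {u y : ℝ} (h : geInv L u < y) :
    ∃ x : ℝ, (u : EReal) ≤ LF L x ∧ x < y := by
  obtain ⟨_, ⟨x, hx, rfl⟩, hxy⟩ := sInf_lt_iff.1 h
  exact ⟨x, hx, EReal.coe_lt_coe_iff.1 hxy⟩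

lemma le_LF_sum_of_le_hconv {n : ℕ} (hn : 0 < n) {L : Fin n → ℝ → EReal} {M : ℝ → EReal}
    (hM : ∀ t > 0, M t ≤ hconv n L t) {u : EReal} {x : Fin n → ℝ}
    (hx : ∀ j, u ≤ LF (L j) (x j)) : u ≤ LF M (∑ j, x j) := by
  refine EReal.ge_of_forall_gt_iff_ge.1 fun z hz => ?_
  choose s hs hLs using fun j => coe_lt_LF_iff.1 (hz.trans_le (hx j))
  -- Hölder weights `α j = t / s j`, so that `t / α j = s j` and `∑ j, α j = 1`.
  set t := (∑ j, (s j)⁻¹)⁻¹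
  have ht : 0 < t := inv_pos.2 <| Finset.sum_pos (fun j _ => inv_pos.2 (hs j))
    (Finset.univ_nonempty_iff.2 (Fin.pos_iff_nonempty.1 hn))
  have hα : ∀ j, 0 < t / s j := fun j => div_pos ht (hs j)
  have hαsum : ∑ j, t / s j = 1 := by
    simp only [div_eq_mul_inv, ← Finset.mul_sum, t]
    exact inv_mul_cancel₀ (inv_pos.1 ht).ne'
  refine coe_le_LF_of_le ht ?_
  calc M t ≤ ∑ j, ((t / s j : ℝ) : EReal) * L j (t / (t / s j)) :=
        (hM t ht).trans (iInf₂_le _ ⟨hα, hαsum⟩)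
    _ ≤ ∑ j, ((t / s j : ℝ) : EReal) * ((s j * x j - z : ℝ) : EReal) := by
        gcongr with j
        · exact (EReal.coe_pos.2 (hα j)).le
        · rw [div_div_cancel₀ ht.ne']
          exact (hLs j).le
    _ = ((t * ∑ j, x j - z : ℝ) : EReal) := by
        have hterm : ∀ j, t / s j * (s j * x j - z) = t * x j - t / s j * z := fun j => by
          rw [mul_sub, ← mul_assoc, div_mul_cancel₀ t (hs j).ne']
        simp_rw [← EReal.coe_mul, ← EReal.coe_finset_sum_s14, hterm, Finset.sum_sub_distrib,
          ← Finset.mul_sum, ← Finset.sum_mul, hαsum, one_mul]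

lemma geInv_sum_le_of_le_hconv {n : ℕ} (hn : 0 < n) {L : Fin n → ℝ → EReal} {M : ℝ → EReal}
    (hL : ∀ j, ∃ t > 0, L j t ≠ ⊤) (hM : ∀ t > 0, M t ≤ hconv n L t) (u : ℝ) :
    geInv M u ≤ ∑ j, geInv (L j) u := by
  refine EReal.le_of_forall_lt_iff_le.1 fun c hc => ?_
  obtain ⟨y, hy, hyc⟩ :=
    EReal.exists_coe_gt_of_sum_lt Finset.univ (fun j _ => geInv_ne_top (hL j) u) hc
  choose x hx hxy using fun j => exists_le_LF_of_geInv_lt (hy j (Finset.mem_univ j))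
  calc geInv M u ≤ ((∑ j, x j : ℝ) : EReal) := geInv_le (le_LF_sum_of_le_hconv hn hM hx)
    _ ≤ c := EReal.coe_le_coe_iff.2
        ((Finset.sum_le_sum fun j _ => (hxy j).le).trans hyc.le)

lemma ENNReal.log_prod {ι : Type*} (s : Finset ι) (f : ι → ENNReal) :
    ENNReal.log (∏ i ∈ s, f i) = ∑ i ∈ s, ENNReal.log (f i) := by
  classical
  induction s using Finset.induction_on with
  | empty => simp
  | insert a s ha ih => rw [Finset.prod_insert ha, Finset.sum_insert ha, ENNReal.log_mul_add, ih]

lemma cramer_sum_le_hconv {Ω : Type*} [MeasurableSpace Ω] (μ : Measure Ω) {n : ℕ}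
    {X : Fin n → Ω → ℝ} (hX : ∀ j, Measurable (X j)) (t : ℝ) :
    cramer μ (fun ω => ∑ j, X j ω) t ≤ hconv n (fun j => cramer μ (X j)) t := by
  refine le_iInf₂ fun α ⟨hα, hαsum⟩ => ?_
  have hexp : ∀ ω, ENNReal.ofReal (Real.exp (t * ∑ j, X j ω)) =
      ∏ j, ENNReal.ofReal (Real.exp (t / α j * X j ω)) ^ α j := fun ω => by
    simp_rw [ENNReal.ofReal_rpow_of_pos (Real.exp_pos _), ← Real.exp_mul,
      ← ENNReal.ofReal_prod_of_nonneg fun j _ => (Real.exp_pos _).le, ← Real.exp_sum,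
      Finset.mul_sum]
    congr 2
    refine Finset.sum_congr rfl fun j _ => ?_
    rw [mul_right_comm, div_mul_cancel₀ t (hα j).ne']
  calc cramer μ (fun ω => ∑ j, X j ω) t
      = ENNReal.log (∫⁻ ω, ∏ j, ENNReal.ofReal (Real.exp (t / α j * X j ω)) ^ α j ∂μ) := by
        simp_rw [cramer, hexp]
    _ ≤ ENNReal.log (∏ j, (∫⁻ ω, ENNReal.ofReal (Real.exp (t / α j * X j ω)) ∂μ) ^ α j) :=
        ENNReal.log_monotone <| ENNReal.lintegral_prod_norm_pow_le _
          (fun j _ => (by fun_prop : Measurable _).aemeasurable) hαsum fun j _ => (hα j).le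
    _ = ∑ j, (α j : EReal) * cramer μ (X j) (t / α j) := by
        simp_rw [ENNReal.log_prod, ENNReal.log_rpow, cramer]

theorem geInv_cramer_sum_le_general (Ω : Type*) [MeasurableSpace Ω] (μ : Measure Ω)
    (n : ℕ) (hn : 0 < n) (X : Fin n → Ω → ℝ)
    (hX : ∀ j, Measurable (X j))
    (hfin : ∀ j, ∃ t : ℝ, 0 < t ∧ ∫⁻ ω, ENNReal.ofReal (Real.exp (t * X j ω)) ∂μ ≠ ⊤) :
    ∀ u : ℝ, geInv (cramer μ (fun ω => ∑ j, X j ω)) u ≤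
      ∑ j, geInv (cramer μ (X j)) u :=
  geInv_sum_le_of_le_hconv hn
    (fun j => (hfin j).imp fun _ ⟨ht, hI⟩ => ⟨ht, ENNReal.log_eq_top_iff.not.2 hI⟩)
    (fun t _ => cramer_sum_le_hconv μ hX t)

/-- For random variables `X_1,…,X_n` (not assumed independent),
`(L_{X_1+⋯+X_n})^{*←}(u) ≤ L_{X_1}^{*←}(u) + ⋯ + L_{X_n}^{*←}(u)` for all real `u`. -/
theorem geInv_cramer_sum_le (Ω : Type*) [MeasurableSpace Ω] (μ : Measure Ω)
    [IsProbabilityMeasure μ] (n : ℕ) (hn : 0 < n) (X : Fin n → Ω → ℝ)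
    (hX : ∀ j, Measurable (X j))
    (hfin : ∀ j, ∃ t : ℝ, 0 < t ∧ ∫⁻ ω, ENNReal.ofReal (Real.exp (t * X j ω)) ∂μ ≠ ⊤) :
    ∀ u : ℝ, geInv (cramer μ (fun ω => ∑ j, X j ω)) u ≤
      ∑ j, geInv (cramer μ (X j)) u :=
  geInv_cramer_sum_le_general Ω μ n hn X hX hfin
end
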